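/- arXiv:2603.29566 — 3 statements merged into one kernel-verified Lean document; each statement's English description precedes it below -/
import Mathlib

section
/- For a filter θ ∈ S[G] and any r ≥ 1, the r-th Hadamard power of a convolution satisfies σ_r(θ ∗ ψ) = (θ^{⊗r} ∗ ψ^{⊗r})|_G for all ψ ∈ S[G], where G is identified with the diagonal subgroup of G^r. -/
open Finset

variable {G : Type*} [Group G] [Fintype G]
variable {S : Type*} [CommRing S]

/-- Convolution in the group algebra `S[G]`. -/
def conv {G : Type*} [Group G] [Fintype G] (θ ψ : G → S) : G → S :=
  fun g => ∑ h : G, θ (g * h⁻¹) * ψ h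

/-- The `r`-fold Kronecker power of a filter, as a filter on `G^r`. -/
def kronPow (r : ℕ) (θ : G → S) : (Fin r → G) → S := fun v => ∏ i, θ (v i)

/-- `σ_r(θ ∗ ψ) = (θ^{⊗r} ∗ ψ^{⊗r})|_G` on the diagonal copy of `G` in `G^r`. -/
theorem hadamard_pow_conv (r : ℕ) (hr : 1 ≤ r) (θ ψ : G → S) (g : G) :
    (conv θ ψ g) ^ r = conv (kronPow r θ) (kronPow r ψ) (fun _ : Fin r => g) := by
  simp only [conv, kronPow, Pi.mul_apply, Pi.inv_apply]
  rw [← Fin.prod_const r (∑ h : G, θ (g * h⁻¹) * ψ h), Finset.prod_univ_sum]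
  rw [← Fintype.piFinset_univ]
  exact Finset.sum_congr rfl fun v _ => by rw [Finset.prod_mul_distrib]
end

section
/- Let θ ∈ S[G] with |G| = n, and let θ^{G^r} ∈ S[G^r] denote the extension of θ by zero along the diagonal subgroup G ≅ Δ < G^r (i.e., θ^{G^r}(g,…,g) = θ(g) and θ^{G^r} vanishes off the diagonal). Then det(θ^{G^r}) = det(θ)^{n^{r-1}}. -/
open Finset

variable {G : Type*} [Group G] [Fintype G] [DecidableEq G]
variable {S : Type*} [CommRing S]

/-- The circulant matrix of a filter. -/
def Mat {G : Type*} [Group G] [Fintype G] (θ : G → S) : Matrix G G S :=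
  Matrix.of fun i j => θ (i * j⁻¹)

/-- The extension of a filter `θ` on `G` by zero along the diagonal subgroup of `G^r`. -/
noncomputable def diagExt (r : ℕ) (θ : G → S) : (Fin r → G) → S :=
  fun v => if h : ∃ g : G, v = fun _ => g then θ h.choose else 0

/-!
Write a point of `G^(k+1)` as `(a, a x₁, …, a xₖ)` with `(a, x) ∈ G × G^k`. Then
`(a, a x) (b, b y)⁻¹` lies on the diagonal exactly when `x = y`, and there it is the constant
`a b⁻¹`. So in these coordinates the circulant matrix of `θ^{G^(k+1)}` is block diagonal, with
one block `Mat θ` for each `x ∈ G^k` (the `x`-coordinates label the cosets of the diagonal),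
and its determinant is `det (Mat θ) ^ n^k`.
-/

section diagCoords

variable {H : Type*} [Group H]

def diagCoords (k : ℕ) : H × (Fin k → H) ≃ (Fin (k + 1) → H) where
  toFun p := Fin.cons p.1 (p.1 • p.2)
  invFun v := (v 0, (v 0)⁻¹ • Fin.tail v)
  left_inv p := by ext <;> simp
  right_inv v := by
    ext i
    cases i using Fin.cases <;> simp [Fin.tail]

theorem diagCoords_apply (k : ℕ) (a : H) (x : Fin k → H) :
    diagCoords k (a, x) = Fin.cons a (a • x) := rfl

theorem diagCoords_mul_inv (k : ℕ) (a b : H) (x y : Fin k → H) :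
    diagCoords k (a, x) * (diagCoords k (b, y))⁻¹ =
      Fin.cons (a * b⁻¹) fun i => a * (x i * (y i)⁻¹) * b⁻¹ := by
  ext i
  cases i using Fin.cases <;> simp [diagCoords_apply, mul_assoc]

end diagCoords

theorem diagExt_const {α : Type*} [Fintype α] [DecidableEq α] (k : ℕ) (θ : α → S) (a : α) :
    diagExt (k + 1) θ (fun _ => a) = θ a := by
  have hex : ∃ g : α, (fun _ => a : Fin (k + 1) → α) = fun _ => g := ⟨a, rfl⟩
  rw [diagExt, dif_pos hex]
  exact congrArg θ (congrFun hex.choose_spec 0).symm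

theorem diagExt_cons_of_ne {α : Type*} [Fintype α] [DecidableEq α] (k : ℕ) (θ : α → S) (a : α)
    (x : Fin k → α) (hx : x ≠ fun _ => a) : diagExt (k + 1) θ (Fin.cons a x) = 0 := by
  refine dif_neg ?_
  rintro ⟨g, hg⟩
  have ha : a = g := by simpa using congrFun hg 0
  exact hx (funext fun i => by simpa [ha] using congrFun hg i.succ)

theorem mat_diagExt_submatrix_diagCoords (k : ℕ) (θ : G → S) :
    (Mat (diagExt (k + 1) θ)).submatrix (diagCoords k) (diagCoords k) =
      Matrix.blockDiagonal fun _ : Fin k → G => Mat θ := by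
  ext ⟨a, x⟩ ⟨b, y⟩
  simp only [Matrix.submatrix_apply, Matrix.blockDiagonal_apply, Mat, Matrix.of_apply,
    diagCoords_mul_inv]
  by_cases hxy : x = y
  · subst hxy
    have hdiag : (Fin.cons (a * b⁻¹) fun i => a * (x i * (x i)⁻¹) * b⁻¹ : Fin (k + 1) → G) =
        fun _ => a * b⁻¹ := by
      ext i
      cases i using Fin.cases <;> simp
    rw [hdiag, diagExt_const, if_pos rfl]
  · rw [if_neg hxy, diagExt_cons_of_ne]
    intro h
    exact hxy (funext fun i => by simpa [mul_inv_eq_one] using congrFun h i)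

/-- `det(θ^{G^r}) = det(θ)^{n^{r-1}}` where `n = |G|`. -/
theorem det_diagExt (r : ℕ) (hr : 1 ≤ r) (θ : G → S) :
    (Mat (diagExt r θ)).det = (Mat θ).det ^ (Fintype.card G ^ (r - 1)) := by
  obtain ⟨k, rfl⟩ : ∃ k, r = k + 1 := ⟨r - 1, by omega⟩
  rw [← Matrix.det_submatrix_equiv_self (diagCoords k), mat_diagExt_submatrix_diagCoords,
    Matrix.det_blockDiagonal, Finset.prod_const, Finset.card_univ, Fintype.card_fun,
    Fintype.card_fin, Nat.add_sub_cancel]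
end

section
/- A filter θ ∈ S[G] is invertible in S[G] if and only if both its r-fold Kronecker power θ^{⊗r} and its diagonal extension θ^{G^r} are invertible in S[G^r], for any r ≥ 1. -/
open Finset

variable {G : Type*} [Group G] [Fintype G] [DecidableEq G]
variable {S : Type*} [CommRing S]

/-- The convolution identity (indicator of the group identity). -/
def delta {G : Type*} [Group G] [DecidableEq G] : G → S :=
  fun g => if g = 1 then 1 else 0

section Aux

variable {r : ℕ}

lemma const_inj (hr : 1 ≤ r) :
    Function.Injective (fun g : G => (fun _ : Fin r => g)) := by
  intro a b h
  exact congrFun h ⟨0, hr⟩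

lemma sum_diag_aux (hr : 1 ≤ r) (F : (Fin r → G) → S)
    (h0 : ∀ v : Fin r → G, (¬∃ g : G, v = fun _ => g) → F v = 0) :
    ∑ v : Fin r → G, F v = ∑ g : G, F (fun _ => g) := by
  rw [← Finset.sum_image (f := F) (s := (univ : Finset G))
      (g := fun g : G => (fun _ : Fin r => g))
      (fun a _ b _ h => const_inj hr h)]
  symm
  apply Finset.sum_subset (Finset.subset_univ _)
  intro v _ hv
  apply h0
  rintro ⟨g, rfl⟩
  exact hv (Finset.mem_image.2 ⟨g, Finset.mem_univ _, rfl⟩)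

lemma diagExt_const_s11 (hr : 1 ≤ r) (θ : G → S) (g : G) :
    diagExt r θ (fun _ => g) = θ g := by
  have hex : ∃ g' : G, (fun _ : Fin r => g) = fun _ => g' := ⟨g, rfl⟩
  rw [diagExt, dif_pos hex]
  have h1 : g = hex.choose := congrFun hex.choose_spec ⟨0, hr⟩
  rw [← h1]

lemma diagExt_not_const (θ : G → S) (v : Fin r → G)
    (hv : ¬∃ g : G, v = fun _ => g) : diagExt r θ v = 0 :=
  dif_neg hv

lemma delta_const (hr : 1 ≤ r) (g : G) :
    (delta (fun _ : Fin r => g) : S) = delta g := by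
  unfold delta
  congr 1
  simp only [eq_iff_iff]
  constructor
  · intro h
    exact congrFun h ⟨0, hr⟩
  · intro h
    funext i
    exact h

lemma conv_diagExt_left (hr : 1 ≤ r) (θ : G → S) (ψ : (Fin r → G) → S) (g : G) :
    conv (diagExt r θ) ψ (fun _ => g) = ∑ a : G, θ (g * a⁻¹) * ψ (fun _ => a) := by
  unfold conv
  rw [sum_diag_aux hr]
  · apply Finset.sum_congr rfl
    intro a _
    have h1 : ((fun _ : Fin r => g) * (fun _ : Fin r => a)⁻¹) = fun _ : Fin r => g * a⁻¹ := rfl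
    rw [h1, diagExt_const_s11 hr]
  · intro h hh
    have : ¬∃ c : G, ((fun _ : Fin r => g) * h⁻¹) = fun _ => c := by
      rintro ⟨c, hc⟩
      apply hh
      refine ⟨c⁻¹ * g, ?_⟩
      funext i
      have := congrFun hc i
      simp only [Pi.mul_apply, Pi.inv_apply] at this
      have : (h i)⁻¹ = g⁻¹ * c := by
        rw [← this]; group
      calc h i = ((h i)⁻¹)⁻¹ := by group
        _ = (g⁻¹ * c)⁻¹ := by rw [this]
        _ = c⁻¹ * g := by group
    rw [diagExt_not_const _ _ this, zero_mul]

lemma conv_diagExt_right (hr : 1 ≤ r) (ψ : (Fin r → G) → S) (θ : G → S) (g : G) :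
    conv ψ (diagExt r θ) (fun _ => g) = ∑ a : G, ψ (fun _ => g * a⁻¹) * θ a := by
  unfold conv
  rw [sum_diag_aux hr]
  · apply Finset.sum_congr rfl
    intro a _
    have h1 : ((fun _ : Fin r => g) * (fun _ : Fin r => a)⁻¹) = fun _ : Fin r => g * a⁻¹ := rfl
    rw [h1, diagExt_const_s11 hr]
  · intro h hh
    rw [diagExt_not_const _ _ hh, mul_zero]

lemma conv_diagExt (hr : 1 ≤ r) (θ ψ : G → S) :
    conv (diagExt r θ) (diagExt r ψ) = diagExt r (conv θ ψ) := by
  funext v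
  by_cases hv : ∃ g : G, v = fun _ => g
  · obtain ⟨g, rfl⟩ := hv
    rw [conv_diagExt_left hr, diagExt_const_s11 hr]
    apply Finset.sum_congr rfl
    intro a _
    rw [diagExt_const_s11 hr]
  · rw [diagExt_not_const _ _ hv]
    unfold conv
    apply Finset.sum_eq_zero
    intro h _
    rcases Classical.em (∃ a : G, h = fun _ => a) with ⟨a, rfl⟩ | hh
    · have : ¬∃ c : G, (v * (fun _ : Fin r => a)⁻¹) = fun _ => c := by
        rintro ⟨c, hc⟩
        apply hv
        refine ⟨c * a, ?_⟩
        funext i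
        have := congrFun hc i
        simp only [Pi.mul_apply, Pi.inv_apply] at this
        calc v i = v i * a⁻¹ * a := by group
          _ = c * a := by rw [this]
      rw [diagExt_not_const _ _ this, zero_mul]
    · rw [diagExt_not_const _ _ hh, mul_zero]

lemma diagExt_delta (hr : 1 ≤ r) :
    diagExt r (delta : G → S) = delta := by
  funext v
  by_cases hv : ∃ g : G, v = fun _ => g
  · obtain ⟨g, rfl⟩ := hv
    rw [diagExt_const_s11 hr, delta_const hr]
  · rw [diagExt_not_const _ _ hv]
    unfold delta
    rw [if_neg]
    intro h
    exact hv ⟨1, h⟩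

lemma conv_kronPow (θ ψ : G → S) :
    conv (kronPow r θ) (kronPow r ψ) = kronPow r (conv θ ψ) := by
  funext v
  unfold conv kronPow
  calc ∑ h : Fin r → G, (∏ i, θ ((v * h⁻¹) i)) * ∏ i, ψ (h i)
      = ∑ h : Fin r → G, ∏ i, θ (v i * (h i)⁻¹) * ψ (h i) := by
        apply Finset.sum_congr rfl
        intro h _
        rw [← Finset.prod_mul_distrib]
        exact Finset.prod_congr rfl fun i _ => rfl
    _ = ∏ i, ∑ a : G, θ (v i * a⁻¹) * ψ a := by
        rw [Finset.prod_univ_sum]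
        rw [← Fintype.piFinset_univ]

lemma kronPow_delta : kronPow r (delta : G → S) = delta := by
  funext v
  unfold kronPow delta
  by_cases hv : v = 1
  · subst hv
    simp [Pi.one_apply]
  · rw [if_neg hv]
    have : ∃ i, v i ≠ 1 := by
      by_contra h
      push_neg at h
      exact hv (funext h)
    obtain ⟨i, hi⟩ := this
    exact Finset.prod_eq_zero (Finset.mem_univ i) (if_neg hi)

end Aux

/-- `θ` is invertible in `S[G]` iff both `θ^{⊗r}` and `θ^{G^r}` are invertible in `S[G^r]`. -/
theorem invertible_iff_kronPow_and_diagExt_invertible (r : ℕ) (hr : 1 ≤ r) (θ : G → S) :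
    (∃ ψ : G → S, conv θ ψ = delta ∧ conv ψ θ = delta) ↔
      ((∃ ψ : (Fin r → G) → S, conv (kronPow r θ) ψ = delta ∧ conv ψ (kronPow r θ) = delta) ∧
       (∃ ψ : (Fin r → G) → S, conv (diagExt r θ) ψ = delta ∧ conv ψ (diagExt r θ) = delta)) := by
  constructor
  · rintro ⟨ψ, h1, h2⟩
    constructor
    · exact ⟨kronPow r ψ, by rw [conv_kronPow, h1, kronPow_delta],
        by rw [conv_kronPow, h2, kronPow_delta]⟩
    · exact ⟨diagExt r ψ, by rw [conv_diagExt hr, h1, diagExt_delta hr],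
        by rw [conv_diagExt hr, h2, diagExt_delta hr]⟩
  · rintro ⟨-, ψ, h1, h2⟩
    refine ⟨fun g => ψ (fun _ => g), ?_, ?_⟩
    · funext g
      have := congrFun h1 (fun _ : Fin r => g)
      rw [conv_diagExt_left hr, delta_const hr] at this
      exact this
    · funext g
      have := congrFun h2 (fun _ : Fin r => g)
      rw [conv_diagExt_right hr, delta_const hr] at this
      exact this
end
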